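/- arXiv:1801.07940 — 3 statements merged into one kernel-verified Lean document; each statement's English description precedes it below -/
import Mathlib

section
/- Let E be a real vector space, a, b, c, c₁, c₂ distinct points of E, Δ = conv{a, c₁, c₂}, f : Δ → ℝ affine, and η ∈ ℝ. Suppose b ∈ F := {x ∈ Δ : f(x) ≥ η}, a ∉ F, and f(c), f(c₁), f(c₂) > η. Assume (A1) c₁ − a and c₁ − c₂ are linearly independent, and (A2) b lies in the open segment between a and c, and c lies in the open segment between c₁ and c₂. Then b is not an extreme point of F. -/
/-!
By (A2), `b` is a combination of `a, c₁, c₂` with all three weights positive. Since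
`f c₁ > η > f a`, the linear part `L` of `f` is nonzero on `c₁ - a`, so by (A1)
`w = L (c₁ - c₂) • (c₁ - a) - L (c₁ - a) • (c₁ - c₂)` is a nonzero vector with `L w = 0`.
For small `ε > 0` the weights of `b ± ε w` stay nonnegative, so both points lie in `Δ`, have the
same `f`-value as `b`, hence lie in `F`, and `b` is their midpoint.
-/

open Filter Topology

section
variable {E : Type*} [AddCommGroup E] [Module ℝ E]

theorem smul_add_smul_add_smul_mem_convexHull {x y z : E} {u v r : ℝ}
    (hu : 0 ≤ u) (hv : 0 ≤ v) (hr : 0 ≤ r) (huvr : u + v + r = 1) :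
    u • x + v • y + r • z ∈ convexHull ℝ ({x, y, z} : Set E) := by
  have := (convex_convexHull ℝ ({x, y, z} : Set E)).sum_mem (t := Finset.univ)
    (w := ![u, v, r]) (z := ![x, y, z]) (by simp [Fin.forall_fin_succ, *])
    (by simp [Fin.sum_univ_three, huvr])
    (by simp [Fin.forall_fin_succ, subset_convexHull ℝ ({x, y, z} : Set E) _])
  simpa [Fin.sum_univ_three] using this

theorem eventually_add_smul_mem_convexHull {x y z b w : E} {u v r α β γ : ℝ}
    (hu : 0 < u) (hv : 0 < v) (hr : 0 < r) (huvr : u + v + r = 1) (hαβγ : α + β + γ = 0)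
    (hb : b = u • x + v • y + r • z) (hw : w = α • x + β • y + γ • z) :
    ∀ᶠ t in 𝓝 (0 : ℝ), b + t • w ∈ convexHull ℝ ({x, y, z} : Set E) := by
  have hpos : ∀ {s : ℝ} (δ : ℝ), 0 < s → ∀ᶠ t in 𝓝 (0 : ℝ), 0 ≤ s + t * δ := fun δ hs =>
    (Continuous.tendsto (by fun_prop) 0 |>.eventually_const_lt (by simpa using hs)).mono
      fun _ ht => ht.le
  filter_upwards [hpos α hu, hpos β hv, hpos γ hr] with t hα hβ hγ
  convert smul_add_smul_add_smul_mem_convexHull (x := x) (y := y) (z := z) hα hβ hγ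
    (by linear_combination huvr + t * hαβγ) using 1
  rw [hb, hw]
  module

theorem exists_pos_of_eventually_nhds_zero {P : ℝ → Prop} (h : ∀ᶠ t in 𝓝 0, P t) :
    ∃ ε > 0, P ε ∧ P (-ε) := by
  have hneg : ∀ᶠ t in 𝓝 (0 : ℝ), P (-t) := (continuous_neg.tendsto' 0 0 neg_zero).eventually h
  have hright : ∀ᶠ t in 𝓝[>] (0 : ℝ), (P t ∧ P (-t)) ∧ 0 < t :=
    ((h.and hneg).filter_mono nhdsWithin_le_nhds).and self_mem_nhdsWithin
  exact hright.exists.imp fun ε ⟨hP, hε⟩ => ⟨hε, hP⟩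

theorem LinearMap.apply_smul_sub_apply_smul_ne_zero {L : E →ₗ[ℝ] ℝ} {x y : E}
    (hli : LinearIndependent ℝ ![x, y]) (hx : L x ≠ 0) : L y • x - L x • y ≠ 0 := by
  intro h
  have := (LinearIndependent.pair_iff.1 hli (L y) (-L x) (by simpa [sub_eq_add_neg] using h)).2
  exact hx (neg_eq_zero.1 this)

theorem notMem_extremePoints_of_add_mem_of_sub_mem {F : Set E} {b w : E} (hw : w ≠ 0)
    (hadd : b + w ∈ F) (hsub : b - w ∈ F) : b ∉ F.extremePoints ℝ := by
  intro hb
  have hmid : b ∈ openSegment ℝ (b + w) (b - w) :=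
    ⟨1 / 2, 1 / 2, by norm_num, by norm_num, by norm_num, by module⟩
  exact hw (by simpa using hb.2 hadd hsub hmid)

end

theorem stmt3_general {E : Type*} [AddCommGroup E] [Module ℝ E]
    (a b c c₁ c₂ : E)
    (f : E →ᵃ[ℝ] ℝ) (η : ℝ)
    (Δ : Set E) (hΔ : Δ = convexHull ℝ {a, c₁, c₂})
    (F : Set E) (hF : F = {x ∈ Δ | η ≤ f x})
    (hbF : b ∈ F) (haF : a ∉ F)
    (hc1 : η < f c₁)
    (hli : LinearIndependent ℝ ![c₁ - a, c₁ - c₂])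
    (hbseg : b ∈ openSegment ℝ a c) (hcseg : c ∈ openSegment ℝ c₁ c₂) :
    b ∉ F.extremePoints ℝ := by
  subst hΔ hF
  have hfa : f a < η := lt_of_not_ge fun h => haF ⟨subset_convexHull ℝ _ (by simp), h⟩
  obtain ⟨s, t, hs, ht, hst, hb⟩ := hbseg
  obtain ⟨t₁, t₂, ht₁, ht₂, ht₁₂, hc⟩ := hcseg
  have hL : ∀ x y, f.linear (x - y) = f x - f y := fun x y => f.linearMap_vsub x y
  set p := f c₁ - f a
  set q := f c₁ - f c₂
  set w := q • (c₁ - a) - p • (c₁ - c₂) with hw_def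
  have hw : w ≠ 0 := by
    simpa only [w, p, q, hL] using
      f.linear.apply_smul_sub_apply_smul_ne_zero hli (by rw [hL]; linarith)
  have hLw : f.linear w = 0 := by
    rw [map_sub, map_smul, map_smul, hL, hL, smul_eq_mul, smul_eq_mul]
    ring
  have hfw : ∀ ε : ℝ, f (b + ε • w) = f b := fun ε => by
    rw [add_comm, ← vadd_eq_add, f.map_vadd, map_smul, hLw, smul_zero, zero_vadd]
  obtain ⟨ε, hε, hplus, hminus⟩ := exists_pos_of_eventually_nhds_zero
    (eventually_add_smul_mem_convexHull (x := a) (y := c₁) (z := c₂) (b := b) (w := w)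
      (α := -q) (β := q - p) (γ := p)
      hs (mul_pos ht ht₁) (mul_pos ht ht₂) (by linear_combination hst + t * ht₁₂) (by ring)
      (by rw [← hb, ← hc]; module) (by rw [hw_def]; module))
  have hfminus := hfw (-ε)
  rw [neg_smul, ← sub_eq_add_neg] at hminus hfminus
  exact notMem_extremePoints_of_add_mem_of_sub_mem (smul_ne_zero hε.ne' hw)
    ⟨hplus, (hfw ε).symm ▸ hbF.2⟩ ⟨hminus, hfminus.symm ▸ hbF.2⟩

/-- the triangle lemma: under assumptions (A1) and (A2), the point `b`
is not an extreme point of `F = {x ∈ Δ : f x ≥ η}`. -/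
theorem stmt3 {E : Type*} [AddCommGroup E] [Module ℝ E]
    (a b c c₁ c₂ : E)
    (hdist : List.Pairwise (· ≠ ·) [a, b, c, c₁, c₂])
    (f : E →ᵃ[ℝ] ℝ) (η : ℝ)
    (Δ : Set E) (hΔ : Δ = convexHull ℝ {a, c₁, c₂})
    (F : Set E) (hF : F = {x ∈ Δ | η ≤ f x})
    (hbF : b ∈ F) (haF : a ∉ F)
    (hc : η < f c) (hc1 : η < f c₁) (hc2 : η < f c₂)
    (hli : LinearIndependent ℝ ![c₁ - a, c₁ - c₂])
    (hbseg : b ∈ openSegment ℝ a c) (hcseg : c ∈ openSegment ℝ c₁ c₂) :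
    b ∉ F.extremePoints ℝ :=
  stmt3_general a b c c₁ c₂ f η Δ hΔ F hF hbF haF hc1 hli hbseg hcseg
end

section
/- Let X be a compact convex subset of a Hausdorff locally convex topological real vector space, and let f : X → ℝ be an upper semicontinuous affine function with f ≤ 0 on the set of extreme points of X. Then f ≤ 0 on X. -/
/-!
The maximum of `f` on the compact set `X` is attained at an extreme point (Bauer's maximum
principle). Indeed, `f` attains its maximum `M`; by the convexity inequality the top level set
`X ∩ f⁻¹' [M, ∞)` is a face of `X`, and it is compact, so by Krein–Milman it has an extreme point,
which is then an extreme point of `X`.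
-/

open Set

theorem isExtreme_inter_preimage_Ici_of_forall_le {𝕜 E : Type*} [Field 𝕜] [LinearOrder 𝕜]
    [IsStrictOrderedRing 𝕜] [AddCommGroup E] [Module 𝕜 E] {X : Set E} {f : E → 𝕜} {M : 𝕜}
    (hconv : ∀ x ∈ X, ∀ y ∈ X, ∀ t : 𝕜, 0 ≤ t → t ≤ 1 →
      f (t • x + (1 - t) • y) ≤ t * f x + (1 - t) * f y)
    (hle : ∀ x ∈ X, f x ≤ M) :
    IsExtreme 𝕜 X (X ∩ f ⁻¹' Ici M) := by
  refine ⟨inter_subset_left, ?_⟩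
  rintro a ha b hb _ ⟨-, hz⟩ ⟨s, u, hs, hu, hsu, rfl⟩
  obtain rfl : u = 1 - s := by linarith
  have hM : M ≤ s * f a + (1 - s) * f b := le_trans hz (hconv a ha b hb s hs.le (by linarith))
  exact ⟨ha, show M ≤ f a by nlinarith [hle b hb]⟩

theorem exists_mem_extremePoints_isMaxOn {E : Type*} [AddCommGroup E] [Module ℝ E]
    [TopologicalSpace E] [IsTopologicalAddGroup E] [ContinuousSMul ℝ E] [T2Space E]
    [LocallyConvexSpace ℝ E] {X : Set E} (hXc : IsCompact X) (hXne : X.Nonempty) {f : E → ℝ}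
    (hconv : ∀ x ∈ X, ∀ y ∈ X, ∀ t : ℝ, 0 ≤ t → t ≤ 1 →
      f (t • x + (1 - t) • y) ≤ t * f x + (1 - t) * f y)
    (husc : UpperSemicontinuousOn f X) :
    ∃ z ∈ X.extremePoints ℝ, IsMaxOn f X z := by
  obtain ⟨y, hyX, hy⟩ := husc.exists_isMaxOn hXne hXc
  have hface := isExtreme_inter_preimage_Ici_of_forall_le hconv fun x hx ↦ hy hx
  obtain ⟨z, hz⟩ := (husc.isCompact_inter_preimage_Ici hXc (f y)).extremePoints_nonempty
    ⟨y, hyX, le_refl (f y)⟩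
  exact ⟨z, hface.extremePoints_subset_extremePoints hz,
    fun x hx ↦ show f x ≤ f z from (hy hx).trans (extremePoints_subset hz).2⟩

theorem stmt5_general {E : Type*} [AddCommGroup E] [Module ℝ E] [TopologicalSpace E]
    [IsTopologicalAddGroup E] [ContinuousSMul ℝ E] [T2Space E] [LocallyConvexSpace ℝ E]
    (X : Set E) (hXc : IsCompact X)
    (f : E → ℝ)
    (haff : ∀ x ∈ X, ∀ y ∈ X, ∀ t : ℝ, 0 ≤ t → t ≤ 1 →
      f (t • x + (1 - t) • y) = t * f x + (1 - t) * f y)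
    (husc : UpperSemicontinuousOn f X)
    (hext : ∀ x ∈ X.extremePoints ℝ, f x ≤ 0) :
    ∀ x ∈ X, f x ≤ 0 := by
  intro x hx
  obtain ⟨z, hz, hmax⟩ := exists_mem_extremePoints_isMaxOn hXc ⟨x, hx⟩
    (fun a ha b hb t ht₀ ht₁ ↦ (haff a ha b hb t ht₀ ht₁).le) husc
  exact (hmax hx).trans (hext z hz)

/-- minimum principle for upper semicontinuous affine functions on a
compact convex subset of a Hausdorff locally convex real TVS. -/
theorem stmt5 {E : Type*} [AddCommGroup E] [Module ℝ E] [TopologicalSpace E]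
    [IsTopologicalAddGroup E] [ContinuousSMul ℝ E] [T2Space E] [LocallyConvexSpace ℝ E]
    (X : Set E) (hXc : IsCompact X) (hXconv : Convex ℝ X)
    (f : E → ℝ)
    (haff : ∀ x ∈ X, ∀ y ∈ X, ∀ t : ℝ, 0 ≤ t → t ≤ 1 →
      f (t • x + (1 - t) • y) = t * f x + (1 - t) * f y)
    (husc : UpperSemicontinuousOn f X)
    (hext : ∀ x ∈ X.extremePoints ℝ, f x ≤ 0) :
    ∀ x ∈ X, f x ≤ 0 :=
  stmt5_general X hXc f haff husc hext
end

section
/- Let X be a nonempty compact convex subset of a Hausdorff locally convex real topological vector space and let f : X → ℝ be an affine function whose set C(f) of points of continuity is dense in X. Then C(f) ∩ extremePoints(X) is dense in extremePoints(X). -/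
/-!
Let `Bₙ` be the set of points of `X` where `f` oscillates by at least `1 / (n + 1)`: it is
closed, convex because `f` is affine, disjoint from `C(f)`, and `C(f) = X \ ⋃ Bₙ`.

Each `ext X \ Bₙ` is dense in `ext X`. Otherwise some open `W` meets `ext X` only inside `Bₙ`,
so by Krein–Milman `X = conv (A ∪ Bₙ)` with `A = cl conv (X \ W)`, while by Milman an extreme
point `w ∈ W` lies outside `A`. A continuity point `z` near `w` avoids `A` and `Bₙ`, hence lies in
an open segment from `A` to `Bₙ`; as `f` is affine, continuity at `z` carries over to the
endpoint in `Bₙ`, which is absurd.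

It remains to see that `ext X` has the Baire property. Inside a given neighbourhood, choose
closed slices `Rₖ = {x ∈ X | sup φₖ - 1 ≤ φₖ x}` with `Rₖ₊₁` avoiding `Bₖ`, using that slices
form a neighbourhood base at extreme points (Choquet). Asking moreover that the slice of `φₖ₊₁`
of width `k + 1` lies in `Rₖ` makes `⋂ Rₖ` a face of `X`, so its extreme points (Krein–Milman)
are the required ones.
-/

open Set Filter Topology

section ConvexHullCompact

variable {E : Type*} [AddCommGroup E] [Module ℝ E] [TopologicalSpace E] [ContinuousAdd E]
  [ContinuousSMul ℝ E] {s t : Set E}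

theorem IsCompact.convexJoin (hs : IsCompact s) (ht : IsCompact t) :
    IsCompact (_root_.convexJoin ℝ s t) := by
  have : _root_.convexJoin ℝ s t =
      (fun p : ℝ × E × E => (1 - p.1) • p.2.1 + p.1 • p.2.2) '' (Icc 0 1 ×ˢ s ×ˢ t) := by
    ext x
    simp only [mem_convexJoin, segment_eq_image, mem_image, Prod.exists, mem_prod]
    aesop
  rw [this]
  exact (isCompact_Icc.prod (hs.prod ht)).image (by fun_prop)

theorem isCompact_convexHull_union (hs : IsCompact s) (hs' : Convex ℝ s) (ht : IsCompact t)
    (ht' : Convex ℝ t) : IsCompact (convexHull ℝ (s ∪ t)) := by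
  obtain rfl | hs₀ := s.eq_empty_or_nonempty
  · simpa [ht'.convexHull_eq] using ht
  obtain rfl | ht₀ := t.eq_empty_or_nonempty
  · simpa [hs'.convexHull_eq] using hs
  rw [hs'.convexHull_union ht' hs₀ ht₀]
  exact hs.convexJoin ht

theorem isCompact_convexHull_biUnion {ι : Type*} (I : Finset ι) {D : ι → Set E}
    (hD : ∀ i ∈ I, IsCompact (D i)) (hD' : ∀ i ∈ I, Convex ℝ (D i)) :
    IsCompact (convexHull ℝ (⋃ i ∈ I, D i)) := by
  classical
  induction I using Finset.induction with
  | empty => simp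
  | insert a I _ ih =>
    rw [Finset.set_biUnion_insert, ← convexHull_convexHull_union_right]
    exact isCompact_convexHull_union (hD a (by simp)) (hD' a (by simp))
      (ih (fun i hi => hD i (by simp [hi])) (fun i hi => hD' i (by simp [hi])))
      (convex_convexHull ℝ _)

end ConvexHullCompact

theorem exists_mem_openSegment_of_mem_convexHull_union {𝕜 E : Type*} [Field 𝕜] [LinearOrder 𝕜]
    [IsStrictOrderedRing 𝕜] [AddCommGroup E] [Module 𝕜 E] {s t : Set E} {z : E}
    (hs : Convex 𝕜 s) (ht : Convex 𝕜 t) (hz : z ∈ convexHull 𝕜 (s ∪ t)) (hzs : z ∉ s)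
    (hzt : z ∉ t) : ∃ p ∈ s, ∃ q ∈ t, z ∈ openSegment 𝕜 p q := by
  obtain rfl | hs₀ := s.eq_empty_or_nonempty
  · simp [ht.convexHull_eq, hzt] at hz
  obtain rfl | ht₀ := t.eq_empty_or_nonempty
  · simp [hs.convexHull_eq, hzs] at hz
  rw [hs.convexHull_union ht hs₀ ht₀] at hz
  obtain ⟨p, hp, q, hq, hzpq⟩ := mem_convexJoin.mp hz
  exact ⟨p, hp, q, hq, mem_openSegment_of_ne_left_right (ne_of_mem_of_not_mem hp hzs)
    (ne_of_mem_of_not_mem hq hzt) hzpq⟩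

section Milman

variable {E : Type*} [AddCommGroup E] [Module ℝ E] [TopologicalSpace E] [IsTopologicalAddGroup E]
  [ContinuousSMul ℝ E] [T2Space E] [LocallyConvexSpace ℝ E]

theorem exists_isClosed_convex_mem_nhds_notMem {x y : E} (hxy : x ≠ y) :
    ∃ N ∈ 𝓝 y, IsClosed N ∧ Convex ℝ N ∧ x ∉ N := by
  obtain ⟨U, V, hU, hV, -, hV', hxU, hyV, hUV⟩ :=
    exists_open_convex_of_notMem (𝕜 := ℝ) (mem_singleton_iff.not.mpr hxy) (convex_singleton y)
      isClosed_singleton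
  exact ⟨closure V, mem_of_superset (hV.mem_nhds (hyV rfl)) subset_closure, isClosed_closure,
    hV'.closure, fun hx => (hUV.closure_right hU).ne_of_mem hxU hx rfl⟩

/-- Milman's converse to the Krein–Milman theorem. -/
theorem extremePoints_closure_convexHull_subset {T : Set E} (hT : IsCompact T)
    (hK : IsCompact (closure (convexHull ℝ T))) :
    (closure (convexHull ℝ T)).extremePoints ℝ ⊆ T := by
  set K := closure (convexHull ℝ T)
  intro e he
  by_contra heT
  have hN : ∀ y ∈ T, ∃ N ∈ 𝓝 y, IsClosed N ∧ Convex ℝ N ∧ e ∉ N := fun y hy =>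
    exists_isClosed_convex_mem_nhds_notMem fun h => heT (h ▸ hy)
  choose! N hN hNc hNconv heN using hN
  obtain ⟨I, hIT, hTI⟩ := hT.elim_nhds_subcover N hN
  set J := convexHull ℝ (⋃ y ∈ I, K ∩ N y)
  have hJ : IsCompact J := isCompact_convexHull_biUnion I
    (fun y hy => hK.inter_right (hNc y (hIT y hy)))
    (fun y hy => (convex_convexHull ℝ T).closure.inter (hNconv y (hIT y hy)))
  have hKJ : K ⊆ J := by
    refine closure_minimal (convexHull_min ?_ (convex_convexHull ℝ _)) hJ.isClosed
    intro x hx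
    obtain ⟨y, hyI, hxy⟩ := mem_iUnion₂.mp (hTI hx)
    exact subset_convexHull ℝ _
      (mem_iUnion₂.mpr ⟨y, hyI, subset_closure (subset_convexHull ℝ T hx), hxy⟩)
  have hJK : J ⊆ K := convexHull_min (iUnion₂_subset fun _ _ => inter_subset_left)
    (convex_convexHull ℝ T).closure
  obtain ⟨y, hyI, -, hey⟩ := mem_iUnion₂.mp <| extremePoints_convexHull_subset <|
    inter_extremePoints_subset_extremePoints_of_subset hJK ⟨hKJ (extremePoints_subset he), he⟩
  exact heN y (hIT y hyI) hey

end Milman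

section Slices

variable {E : Type*} [AddCommGroup E] [Module ℝ E] [TopologicalSpace E]

def closedSlice (X : Set E) (φ : E →L[ℝ] ℝ) (t : ℝ) : Set E :=
  {x ∈ X | ∀ y ∈ X, φ y - t ≤ φ x}

variable {X : Set E} {φ : E →L[ℝ] ℝ} {t t' : ℝ}

theorem closedSlice_subset : closedSlice X φ t ⊆ X := fun _ hx => hx.1

theorem closedSlice_mono (htt' : t ≤ t') : closedSlice X φ t ⊆ closedSlice X φ t' :=
  fun _ hx => ⟨hx.1, fun y hy => by linarith [hx.2 y hy]⟩

theorem isClosed_closedSlice (hX : IsClosed X) : IsClosed (closedSlice X φ t) := by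
  have : closedSlice X φ t = X ∩ ⋂ y ∈ X, {x | φ y - t ≤ φ x} := by
    ext; simp [closedSlice]
  rw [this]
  exact hX.inter (isClosed_biInter fun y _ => isClosed_le continuous_const φ.continuous)

theorem closedSlice_nonempty (hX : IsCompact X) (hX₀ : X.Nonempty) (ht : 0 ≤ t) :
    (closedSlice X φ t).Nonempty := by
  obtain ⟨m, hm, hmax⟩ := hX.exists_isMaxOn hX₀ φ.continuous.continuousOn
  exact ⟨m, hm, fun y hy => by linarith [show φ y ≤ φ m from hmax hy]⟩

theorem mem_closedSlice_div {x y : E} {a b : ℝ} (hx : x ∈ X) (hy : y ∈ X) (ha : 0 < a)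
    (hb : 0 ≤ b) (hab : a + b = 1) (hxy : a • x + b • y ∈ closedSlice X φ t) :
    x ∈ closedSlice X φ (t / a) := by
  refine ⟨hx, fun z hz => ?_⟩
  have h₁ := hxy.2 z hz
  have h₂ := hxy.2 y hy
  simp only [map_add, map_smul, smul_eq_mul] at h₁ h₂
  rw [sub_le_iff_le_add, ← sub_le_iff_le_add', ← mul_le_mul_iff_right₀ ha, mul_sub,
    mul_div_cancel₀ t ha.ne']
  obtain rfl : b = 1 - a := by linarith
  rcases le_total (φ z) (φ y) with hzy | hyz
  · nlinarith [mul_le_mul_of_nonneg_left hzy ha.le]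
  · nlinarith [mul_le_mul_of_nonneg_left hyz hb]

theorem iInter_closedSlice_extremePoints_subset {Φ : ℕ → E →L[ℝ] ℝ}
    (hΦ : ∀ k : ℕ, closedSlice X (Φ (k + 1)) (k + 1) ⊆ closedSlice X (Φ k) 1) :
    (⋂ k, closedSlice X (Φ k) 1).extremePoints ℝ ⊆ X.extremePoints ℝ := by
  set R := fun k => closedSlice X (Φ k) 1
  have hR : Antitone R := antitone_nat_of_succ_le fun k =>
    (closedSlice_mono (by norm_cast; omega)).trans (hΦ k)
  -- `x` is `1 / a`-close to the top of every `Φ k`, and the widths `k + 1` exceed `1 / a`.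
  have key : ∀ {x y : E} {a b : ℝ}, x ∈ X → y ∈ X → 0 < a → 0 ≤ b → a + b = 1 →
      a • x + b • y ∈ ⋂ k, R k → x ∈ ⋂ k, R k := by
    intro x y a b hx hy ha hb hab hxy
    refine mem_iInter.mpr fun j => ?_
    obtain ⟨k, hk⟩ := exists_nat_ge (max (1 / a) j)
    refine hR (show j ≤ k by exact_mod_cast (le_max_right _ _).trans hk) (hΦ k ?_)
    refine closedSlice_mono ?_ (mem_closedSlice_div hx hy ha hb hab (mem_iInter.mp hxy (k + 1)))
    linarith [le_max_left (1 / a) j]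
  intro e he
  have heX : e ∈ X := closedSlice_subset (mem_iInter.mp (extremePoints_subset he) 0)
  refine ⟨heX, fun x hx y hy hexy => ?_⟩
  obtain ⟨a, b, ha, hb, hab, rfl⟩ := hexy
  have hmem := extremePoints_subset he
  exact he.2 (key hx hy ha hb.le hab hmem)
    (key hy hx hb ha.le (by rwa [add_comm]) (by rwa [add_comm])) ⟨a, b, ha, hb, hab, rfl⟩

end Slices

section ExtremePoints

variable {E : Type*} [AddCommGroup E] [Module ℝ E] [TopologicalSpace E] [IsTopologicalAddGroup E]
  [ContinuousSMul ℝ E] [T2Space E] [LocallyConvexSpace ℝ E] {X G : Set E} {e : E}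

theorem notMem_closure_convexHull_diff (hX : IsCompact X) (hX' : Convex ℝ X)
    (he : e ∈ X.extremePoints ℝ) (hG : IsOpen G) (heG : e ∈ G) :
    e ∉ closure (convexHull ℝ (X \ G)) := by
  intro heK
  have hKX : closure (convexHull ℝ (X \ G)) ⊆ X :=
    closure_minimal (convexHull_min sdiff_subset hX') hX.isClosed
  have hXG : IsCompact (X \ G) := hX.diff hG
  exact (extremePoints_closure_convexHull_subset hXG
    (hX.of_isClosed_subset isClosed_closure hKX)
    (inter_extremePoints_subset_extremePoints_of_subset hKX ⟨heK, he⟩)).2 heG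

/-- Choquet's lemma: closed slices form a neighbourhood base at an extreme point. -/
theorem exists_closedSlice_subset (hX : IsCompact X) (hX' : Convex ℝ X)
    (he : e ∈ X.extremePoints ℝ) (hG : IsOpen G) (heG : e ∈ G) {t : ℝ} (ht : 0 < t) :
    ∃ φ : E →L[ℝ] ℝ, closedSlice X φ t ⊆ G := by
  obtain ⟨ψ, u, hψu, hue⟩ := geometric_hahn_banach_closed_point (convex_convexHull ℝ _).closure
    isClosed_closure (notMem_closure_convexHull_diff hX hX' he hG heG)
  have hs : 0 < t / (ψ e - u) := div_pos ht (sub_pos.mpr hue)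
  refine ⟨(t / (ψ e - u)) • ψ, fun x hx => ?_⟩
  by_contra hxG
  have hψx := hψu x (subset_closure (subset_convexHull ℝ _ ⟨hx.1, hxG⟩))
  have hex := hx.2 e (extremePoints_subset he)
  simp only [smul_apply, smul_eq_mul] at hex
  have : t / (ψ e - u) * (ψ e - u) = t := div_mul_cancel₀ t (sub_pos.mpr hue).ne'
  nlinarith

theorem exists_closedSlice_subset_closedSlice_diff (hX : IsCompact X) (hX' : Convex ℝ X)
    {B : Set E} (hB : IsClosed B) (hXB : X.extremePoints ℝ ⊆ closure (X.extremePoints ℝ \ B))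
    (φ : E →L[ℝ] ℝ) {t : ℝ} (ht : 0 < t) :
    ∃ φ' : E →L[ℝ] ℝ, closedSlice X φ' t ⊆ closedSlice X φ 1 \ B := by
  obtain rfl | hX₀ := X.eq_empty_or_nonempty
  · exact ⟨φ, fun x hx => absurd hx.1 (notMem_empty x)⟩
  obtain ⟨m, hm, hmax⟩ := hX.exists_isMaxOn hX₀ φ.continuous.continuousOn
  have hF := (ContinuousLinearMap.toExposed.isExposed (l := φ) (A := X))
  obtain ⟨w, hw⟩ := (hF.isCompact hX).extremePoints_nonempty ⟨m, hm, fun y hy => hmax hy⟩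
  have hwX := hF.isExtreme.extremePoints_subset_extremePoints hw
  have hW : IsOpen {x | φ m - 1 < φ x} := isOpen_lt continuous_const φ.continuous
  have hwW : φ m - 1 < φ w := by linarith [(extremePoints_subset hw).2 m hm]
  obtain ⟨e, heW, heX, heB⟩ := mem_closure_iff.mp (hXB hwX) _ hW hwW
  obtain ⟨φ', hφ'⟩ :=
    exists_closedSlice_subset hX hX' heX (hW.inter hB.isOpen_compl) ⟨heW, heB⟩ ht
  refine ⟨φ', fun x hx => ⟨⟨hx.1, fun y hy => ?_⟩, (hφ' hx).2⟩⟩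
  linarith [show φ y ≤ φ m from hmax hy, show φ m - 1 < φ x from (hφ' hx).1]

/-- The Baire property of `X.extremePoints ℝ`, for countably many closed sets. -/
theorem extremePoints_subset_closure_diff_iUnion (hX : IsCompact X) (hX' : Convex ℝ X)
    {B : ℕ → Set E} (hB : ∀ n, IsClosed (B n))
    (hXB : ∀ n, X.extremePoints ℝ ⊆ closure (X.extremePoints ℝ \ B n)) :
    X.extremePoints ℝ ⊆ closure (X.extremePoints ℝ \ ⋃ n, B n) := by
  intro x hx
  rw [mem_closure_iff]
  intro U hU hxU
  obtain ⟨φ₀, hφ₀⟩ := exists_closedSlice_subset hX hX' hx hU hxU one_pos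
  choose next hnext using fun (φ : E →L[ℝ] ℝ) (n : ℕ) =>
    exists_closedSlice_subset_closedSlice_diff hX hX' (hB n) (hXB n) φ (t := n + 1)
      (by positivity)
  let Φ : ℕ → E →L[ℝ] ℝ := fun n => Nat.rec φ₀ (fun k φ => next φ k) n
  have hΦ : ∀ k, closedSlice X (Φ (k + 1)) (k + 1) ⊆ closedSlice X (Φ k) 1 \ B k :=
    fun k => hnext (Φ k) k
  set R := fun k => closedSlice X (Φ k) 1
  have hR : ∀ k, R (k + 1) ⊆ R k \ B k := fun k =>
    (closedSlice_mono (by norm_cast; omega)).trans (hΦ k)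
  have hRc : ∀ k, IsClosed (R k) := fun k => isClosed_closedSlice hX.isClosed
  obtain ⟨e, he⟩ := IsCompact.extremePoints_nonempty
    (hX.of_isClosed_subset (isClosed_iInter hRc) ((iInter_subset R 0).trans closedSlice_subset))
    (IsCompact.nonempty_iInter_of_sequence_nonempty_isCompact_isClosed R
      (fun k => (hR k).trans sdiff_subset)
      (fun k => closedSlice_nonempty hX ⟨x, extremePoints_subset hx⟩ zero_le_one)
      (hX.of_isClosed_subset (hRc 0) closedSlice_subset) hRc)
  have heR := mem_iInter.mp (extremePoints_subset he)
  refine ⟨e, hφ₀ (heR 0), ?_, mem_iUnion.not.mpr fun ⟨n, hn⟩ => (hR n (heR (n + 1))).2 hn⟩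
  exact iInter_closedSlice_extremePoints_subset (fun k => (hΦ k).trans sdiff_subset) he

end ExtremePoints

section Oscillation

variable {E : Type*} [TopologicalSpace E]

def oscillationSet (X : Set E) (f : E → ℝ) (ε : ℝ) : Set E :=
  {x ∈ X | ∀ N ∈ 𝓝 x, ∃ u ∈ N ∩ X, ∃ v ∈ N ∩ X, ε ≤ f u - f v}

variable {X : Set E} {f : E → ℝ} {ε : ℝ} {x : E}

theorem oscillationSet_subset : oscillationSet X f ε ⊆ X := fun _ hx => hx.1

theorem isClosed_oscillationSet (hX : IsClosed X) : IsClosed (oscillationSet X f ε) := by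
  refine isClosed_of_closure_subset fun x hx =>
    ⟨hX.closure_subset_iff.mpr oscillationSet_subset hx, fun N hN => ?_⟩
  obtain ⟨y, hyN, hy⟩ := mem_closure_iff.mp hx (interior N) isOpen_interior
    (mem_interior_iff_mem_nhds.mpr hN)
  obtain ⟨u, hu, v, hv, huv⟩ := hy.2 (interior N) (isOpen_interior.mem_nhds hyN)
  exact ⟨u, ⟨interior_subset hu.1, hu.2⟩, v, ⟨interior_subset hv.1, hv.2⟩, huv⟩

theorem notMem_oscillationSet (hε : 0 < ε) (hf : ContinuousWithinAt f X x) :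
    x ∉ oscillationSet X f ε := by
  intro hx
  obtain ⟨N, hN, hNX⟩ := mem_nhdsWithin_iff_exists_mem_nhds_inter.mp
    (hf (Metric.ball_mem_nhds (f x) (half_pos hε)))
  obtain ⟨u, hu, v, hv, huv⟩ := hx.2 N hN
  have hu' : |f u - f x| < ε / 2 := hNX hu
  have hv' : |f v - f x| < ε / 2 := hNX hv
  linarith [(abs_sub_lt_iff.mp hu').1, (abs_sub_lt_iff.mp hv').2]

theorem continuousWithinAt_of_forall_notMem_oscillationSet (hx : x ∈ X)
    (h : ∀ n : ℕ, x ∉ oscillationSet X f (1 / (n + 1))) : ContinuousWithinAt f X x := by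
  rw [ContinuousWithinAt, Metric.tendsto_nhds]
  intro ε hε
  obtain ⟨n, hn⟩ := exists_nat_one_div_lt hε
  by_contra hfar
  refine h n ⟨hx, fun N hN => ?_⟩
  obtain ⟨y, hyN, hyX, hy⟩ : ∃ y ∈ N, y ∈ X ∧ ε ≤ |f y - f x| := by
    by_contra! hnear
    exact hfar (mem_nhdsWithin_iff_exists_mem_nhds_inter.mpr
      ⟨N, hN, fun y hy => hnear y hy.1 hy.2⟩)
  rcases le_abs'.mp hy with hxy | hxy
  · exact ⟨x, ⟨mem_of_mem_nhds hN, hx⟩, y, ⟨hyN, hyX⟩, by linarith⟩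
  · exact ⟨y, ⟨hyN, hyX⟩, x, ⟨mem_of_mem_nhds hN, hx⟩, by linarith⟩

end Oscillation

section Affine

variable {E : Type*} [AddCommGroup E] [Module ℝ E]

def IsAffineOn (X : Set E) (f : E → ℝ) : Prop :=
  ∀ x ∈ X, ∀ y ∈ X, ∀ t : ℝ, 0 ≤ t → t ≤ 1 → f (t • x + (1 - t) • y) = t * f x + (1 - t) * f y

variable {X : Set E} {f : E → ℝ}

theorem IsAffineOn.map_add_smul {x y : E} {a b : ℝ} (hf : IsAffineOn X f) (hx : x ∈ X)
    (hy : y ∈ X) (ha : 0 ≤ a) (hb : 0 ≤ b) (hab : a + b = 1) :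
    f (a • x + b • y) = a * f x + b * f y := by
  obtain rfl : b = 1 - a := by linarith
  exact hf x hx y hy a ha (by linarith)

variable [TopologicalSpace E] [ContinuousAdd E] [ContinuousSMul ℝ E]

theorem IsAffineOn.convex_oscillationSet (hf : IsAffineOn X f) (hX : Convex ℝ X) (ε : ℝ) :
    Convex ℝ (oscillationSet X f ε) := by
  intro x hx y hy a b ha hb hab
  refine ⟨hX hx.1 hy.1 ha hb hab, fun N hN => ?_⟩
  have hcomb : Continuous fun p : E × E => a • p.1 + b • p.2 := by fun_prop
  have hN' : (fun p : E × E => a • p.1 + b • p.2) ⁻¹' N ∈ 𝓝 (x, y) :=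
    hcomb.continuousAt.preimage_mem_nhds hN
  obtain ⟨P, hP, Q, hQ, hPQ⟩ := mem_nhds_prod_iff.mp hN'
  obtain ⟨u₁, hu₁, v₁, hv₁, h₁⟩ := hx.2 P hP
  obtain ⟨u₂, hu₂, v₂, hv₂, h₂⟩ := hy.2 Q hQ
  refine ⟨a • u₁ + b • u₂, ⟨@hPQ (u₁, u₂) ⟨hu₁.1, hu₂.1⟩, hX hu₁.2 hu₂.2 ha hb hab⟩,
    a • v₁ + b • v₂, ⟨@hPQ (v₁, v₂) ⟨hv₁.1, hv₂.1⟩, hX hv₁.2 hv₂.2 ha hb hab⟩, ?_⟩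
  rw [hf.map_add_smul hu₁.2 hu₂.2 ha hb hab, hf.map_add_smul hv₁.2 hv₂.2 ha hb hab]
  have hε : ε = a * ε + b * ε := by rw [← add_mul, hab, one_mul]
  linarith [mul_le_mul_of_nonneg_left h₁ ha, mul_le_mul_of_nonneg_left h₂ hb]

/-- Continuity propagates along segments: `f` restricted to `X` near `q` is an affine image of `f`
near `z`, via the homothety centred at `p` that maps `q` to `z`. -/
theorem IsAffineOn.continuousWithinAt_of_mem_openSegment (hf : IsAffineOn X f)
    (hX : Convex ℝ X) {p q z : E} (hp : p ∈ X) (hq : q ∈ X) (hz : z ∈ openSegment ℝ p q)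
    (hfz : ContinuousWithinAt f X z) : ContinuousWithinAt f X q := by
  obtain ⟨a, b, ha, hb, hab, rfl⟩ := hz
  have hmaps : MapsTo (fun w => a • p + b • w) X X := fun w hw => hX hp hw ha.le hb.le hab
  have hhom : Continuous fun w => a • p + b • w := by fun_prop
  have h : ContinuousWithinAt (fun w => (f (a • p + b • w) - a * f p) / b) X q :=
    ((hfz.comp (x := q) hhom.continuousWithinAt hmaps).sub continuousWithinAt_const).div_const b
  have hfX : ∀ w ∈ X, (f (a • p + b • w) - a * f p) / b = f w := fun w hw => by
    rw [hf.map_add_smul hp hw ha.le hb.le hab]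
    field_simp
    ring
  exact h.congr (fun w hw => (hfX w hw).symm) (hfX q hq).symm

end Affine

section Continuity

variable {E : Type*} [AddCommGroup E] [Module ℝ E] [TopologicalSpace E] [IsTopologicalAddGroup E]
  [ContinuousSMul ℝ E] [T2Space E] [LocallyConvexSpace ℝ E] {X : Set E} {f : E → ℝ}

theorem IsAffineOn.extremePoints_subset_closure_diff (hf : IsAffineOn X f) (hX : IsCompact X)
    (hX' : Convex ℝ X) (hdense : X ⊆ closure {x ∈ X | ContinuousWithinAt f X x}) {C : Set E}
    (hC : IsClosed C) (hC' : Convex ℝ C) (hCX : C ⊆ X)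
    (hCf : ∀ x ∈ C, ¬ ContinuousWithinAt f X x) :
    X.extremePoints ℝ ⊆ closure (X.extremePoints ℝ \ C) := by
  intro w hw
  rw [mem_closure_iff]
  intro W hW hwW
  by_contra hWC
  set A := closure (convexHull ℝ (X \ W))
  have hAX : A ⊆ X := closure_minimal (convexHull_min sdiff_subset hX') hX.isClosed
  have hA : IsCompact A := hX.of_isClosed_subset isClosed_closure hAX
  have hXAC : X ⊆ convexHull ℝ (A ∪ C) := by
    have hext : X.extremePoints ℝ ⊆ A ∪ C := fun e he => by
      by_cases heW : e ∈ W
      · exact Or.inr (by_contra fun heC => hWC ⟨e, heW, he, heC⟩)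
      · exact Or.inl (subset_closure (subset_convexHull ℝ _ ⟨extremePoints_subset he, heW⟩))
    conv_lhs => rw [← closure_convexHull_extremePoints hX hX']
    exact closure_minimal (convexHull_mono hext) (isCompact_convexHull_union hA
      (convex_convexHull ℝ _).closure (hX.of_isClosed_subset hC hCX) hC').isClosed
  obtain ⟨z, hzA, hzX, hzf⟩ := mem_closure_iff.mp (hdense (extremePoints_subset hw)) Aᶜ
    isClosed_closure.isOpen_compl (notMem_closure_convexHull_diff hX hX' hw hW hwW)
  obtain ⟨p, hp, q, hq, hzpq⟩ := exists_mem_openSegment_of_mem_convexHull_union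
    (convex_convexHull ℝ _).closure hC' (hXAC hzX) hzA fun hzC => hCf z hzC hzf
  exact hCf q hq (hf.continuousWithinAt_of_mem_openSegment hX' (hAX hp) (hCX hq) hzpq hzf)

end Continuity

theorem stmt7_general {E : Type*} [AddCommGroup E] [Module ℝ E] [TopologicalSpace E]
    [IsTopologicalAddGroup E] [ContinuousSMul ℝ E] [T2Space E] [LocallyConvexSpace ℝ E]
    (X : Set E) (hXc : IsCompact X) (hXconv : Convex ℝ X)
    (f : E → ℝ)
    (haff : ∀ x ∈ X, ∀ y ∈ X, ∀ t : ℝ, 0 ≤ t → t ≤ 1 →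
      f (t • x + (1 - t) • y) = t * f x + (1 - t) * f y)
    (hdense : X ⊆ closure {x ∈ X | ContinuousWithinAt f X x}) :
    X.extremePoints ℝ ⊆
      closure ({x ∈ X | ContinuousWithinAt f X x} ∩ X.extremePoints ℝ) := by
  have hf : IsAffineOn X f := haff
  set B := fun n : ℕ => oscillationSet X f (1 / (n + 1))
  have hB : ∀ n, IsClosed (B n) := fun n => isClosed_oscillationSet hXc.isClosed
  have hXB : ∀ n, X.extremePoints ℝ ⊆ closure (X.extremePoints ℝ \ B n) := fun n =>
    hf.extremePoints_subset_closure_diff hXc hXconv hdense (hB n)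
      (hf.convex_oscillationSet hXconv _) oscillationSet_subset
      fun x hx hfx => notMem_oscillationSet Nat.one_div_pos_of_nat hfx hx
  refine (extremePoints_subset_closure_diff_iUnion hXc hXconv hB hXB).trans (closure_mono ?_)
  rintro e ⟨he, heB⟩
  refine ⟨⟨extremePoints_subset he, ?_⟩, he⟩
  exact continuousWithinAt_of_forall_notMem_oscillationSet (extremePoints_subset he)
    fun n hn => heB (mem_iUnion_of_mem n hn)

/-- Lemma 1.2, from [ggms]: if the set `C(f)` of points of continuity
of an affine `f` is dense in `X`, then `C(f) ∩ ext X` is dense in `ext X`. -/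
theorem stmt7 {E : Type*} [AddCommGroup E] [Module ℝ E] [TopologicalSpace E]
    [IsTopologicalAddGroup E] [ContinuousSMul ℝ E] [T2Space E] [LocallyConvexSpace ℝ E]
    (X : Set E) (hXne : X.Nonempty) (hXc : IsCompact X) (hXconv : Convex ℝ X)
    (f : E → ℝ)
    (haff : ∀ x ∈ X, ∀ y ∈ X, ∀ t : ℝ, 0 ≤ t → t ≤ 1 →
      f (t • x + (1 - t) • y) = t * f x + (1 - t) * f y)
    (hdense : X ⊆ closure {x ∈ X | ContinuousWithinAt f X x}) :
    X.extremePoints ℝ ⊆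
      closure ({x ∈ X | ContinuousWithinAt f X x} ∩ X.extremePoints ℝ) :=
  stmt7_general X hXc hXconv f haff hdense
end
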